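/- arXiv:1006.0077 — 5 statements merged into one kernel-verified Lean document; each statement's English description precedes it below -/
import Mathlib

section
/- Every operator in the commutant of S₁ (multiplication by z on the Tate algebra H(𝔸_p)) is a limit in the uniform operator topology of polynomials in S₁. -/
open Filter Topology ZeroAtInfty Finset

/-- The unilateral shift as a bounded linear operator on `c₀`; under the coefficient
isomorphism of the Tate algebra `H(𝔸_p)` with `c₀` it is the operator `S₁` of
multiplication by `z`. -/
noncomputable def shiftCLM (K : Type*) [NontriviallyNormedField K] :
    C₀(ℕ, K) →L[K] C₀(ℕ, K) :=
  LinearMap.mkContinuous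
    { toFun := fun x =>
        { toFun := fun n => Nat.rec 0 (fun m _ => x m) n
          continuous_toFun := continuous_of_discreteTopology
          zero_at_infty' := by
            rw [cocompact_eq_atTop (α := ℕ)]
            refine (tendsto_add_atTop_iff_nat 1).mp ?_
            have h := x.zero_at_infty'
            rw [cocompact_eq_atTop (α := ℕ)] at h
            exact h }
      map_add' := by
        intro x y; ext n; cases n <;>
          simp [ZeroAtInftyContinuousMap.add_apply]
      map_smul' := by
        intro c x; ext n; cases n <;>
          simp [ZeroAtInftyContinuousMap.smul_apply] }
    1 (by
      intro x
      rw [one_mul, ← ZeroAtInftyContinuousMap.norm_toBCF_eq_norm,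
        ← ZeroAtInftyContinuousMap.norm_toBCF_eq_norm]
      refine (BoundedContinuousFunction.norm_le (norm_nonneg _)).mpr fun n => ?_
      cases n with
      | zero => simp
      | succ m => exact BoundedContinuousFunction.norm_coe_le_norm x.toBCF m)

/-! An operator `B` commuting with the shift sends `eₙ` to `Sⁿ (B e₀)`, and `Sⁿ` is
non-expansive; since the norm of `c₀` over a non-archimedean field is ultrametric, expanding
`x = ∑ xₙ eₙ` gives `‖B‖ ≤ ‖B e₀‖`. Applied to `B = A - Q(S)` with `Q` a truncation of the
power series whose coefficients are `A e₀`, this makes `‖A - Q(S)‖` the norm of a tail of the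
null sequence `A e₀`. -/

namespace ZeroAtInftyContinuousMap

variable {α E : Type*} [TopologicalSpace α] [SeminormedAddCommGroup E]

theorem norm_apply_le (f : C₀(α, E)) (x : α) : ‖f x‖ ≤ ‖f‖ :=
  f.toBCF.norm_coe_le_norm x

theorem norm_le {f : C₀(α, E)} {C : ℝ} (hC : 0 ≤ C) : ‖f‖ ≤ C ↔ ∀ x, ‖f x‖ ≤ C :=
  f.toBCF.norm_le hC

theorem coe_sum {ι : Type*} (s : Finset ι) (f : ι → C₀(α, E)) :
    ⇑(∑ i ∈ s, f i) = ∑ i ∈ s, ⇑(f i) :=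
  map_sum (⟨⟨(⇑), coe_zero⟩, coe_add⟩ : C₀(α, E) →+ (α → E)) f s

theorem isUltrametricDist [IsUltrametricDist E] : IsUltrametricDist C₀(α, E) :=
  IsUltrametricDist.isUltrametricDist_of_forall_norm_add_le_max_norm fun f g =>
    (norm_le (le_max_of_le_left (norm_nonneg f))).mpr fun x =>
      (IsUltrametricDist.norm_add_le_max _ _).trans
        (max_le_max (norm_apply_le f x) (norm_apply_le g x))

end ZeroAtInftyContinuousMap

section Single

def c0Single (R : Type*) [NormedRing R] (n : ℕ) : C₀(ℕ, R) where
  toFun m := if m = n then 1 else 0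
  continuous_toFun := continuous_of_discreteTopology
  zero_at_infty' := by
    rw [cocompact_eq_atTop]
    refine tendsto_nhds_of_eventually_eq ?_
    filter_upwards [eventually_gt_atTop n] with m hm
    simp [hm.ne']

variable {R : Type*} [NormedRing R]

theorem c0Single_apply (n m : ℕ) : c0Single R n m = if m = n then 1 else 0 := rfl

theorem sum_range_smul_c0Single_apply (x : C₀(ℕ, R)) (M k : ℕ) :
    (∑ n ∈ range M, x n • c0Single R n) k = if k < M then x k else 0 := by
  simp [ZeroAtInftyContinuousMap.coe_sum, c0Single_apply]

theorem tendsto_sum_range_smul_c0Single (x : C₀(ℕ, R)) :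
    Tendsto (fun M => ∑ n ∈ range M, x n • c0Single R n) atTop (𝓝 x) := by
  rw [Metric.tendsto_atTop]
  intro ε hε
  have hx := x.zero_at_infty'
  rw [cocompact_eq_atTop, Metric.tendsto_atTop] at hx
  obtain ⟨N, hN⟩ := hx (ε / 2) (half_pos hε)
  refine ⟨N, fun M hM => lt_of_le_of_lt ?_ (half_lt_self hε)⟩
  rw [dist_eq_norm, ZeroAtInftyContinuousMap.norm_le (half_pos hε).le]
  intro k
  rw [ZeroAtInftyContinuousMap.sub_apply, sum_range_smul_c0Single_apply]
  split_ifs with hk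
  · simpa using (half_pos hε).le
  · simpa using (hN k (hM.trans (not_lt.mp hk))).le

end Single

section Shift

variable {K : Type*} [NontriviallyNormedField K]

theorem shiftCLM_apply_zero (x : C₀(ℕ, K)) : shiftCLM K x 0 = 0 := rfl

theorem shiftCLM_apply_succ (x : C₀(ℕ, K)) (m : ℕ) : shiftCLM K x (m + 1) = x m := rfl

theorem norm_shiftCLM_le : ‖shiftCLM K‖ ≤ 1 :=
  LinearMap.mkContinuous_norm_le _ zero_le_one _

theorem norm_shiftCLM_pow_apply_le (n : ℕ) (x : C₀(ℕ, K)) : ‖(shiftCLM K ^ n) x‖ ≤ ‖x‖ := by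
  induction n with
  | zero => simp
  | succ n ih =>
    rw [pow_succ', mul_apply_eq_comp]
    exact ((shiftCLM K).le_of_opNorm_le norm_shiftCLM_le _).trans (by simpa using ih)

theorem shiftCLM_c0Single (n : ℕ) : shiftCLM K (c0Single K n) = c0Single K (n + 1) := by
  ext (_ | m)
  · simp [shiftCLM_apply_zero, c0Single_apply]
  · simp [shiftCLM_apply_succ, c0Single_apply]

theorem shiftCLM_pow_c0Single_zero (n : ℕ) : (shiftCLM K ^ n) (c0Single K 0) = c0Single K n := by
  induction n with
  | zero => simp
  | succ n ih => rw [pow_succ', mul_apply_eq_comp, ih, shiftCLM_c0Single]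

theorem apply_c0Single_of_commute_shiftCLM {B : C₀(ℕ, K) →L[K] C₀(ℕ, K)}
    (hB : Commute B (shiftCLM K)) (n : ℕ) :
    B (c0Single K n) = (shiftCLM K ^ n) (B (c0Single K 0)) := by
  rw [← shiftCLM_pow_c0Single_zero, ← mul_apply_eq_comp,
    (hB.pow_right n).eq, mul_apply_eq_comp]

theorem opNorm_le_norm_apply_c0Single_zero [IsUltrametricDist K]
    {B : C₀(ℕ, K) →L[K] C₀(ℕ, K)} (hB : Commute B (shiftCLM K)) :
    ‖B‖ ≤ ‖B (c0Single K 0)‖ := by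
  have := ZeroAtInftyContinuousMap.isUltrametricDist (α := ℕ) (E := K)
  refine B.opNorm_le_bound (norm_nonneg _) fun x => ?_
  have hlim := ((B.continuous.tendsto x).comp (tendsto_sum_range_smul_c0Single x)).norm
  refine le_of_tendsto hlim (Eventually.of_forall fun M => ?_)
  have hBsum : B (∑ n ∈ range M, x n • c0Single K n) =
      ∑ n ∈ range M, x n • (shiftCLM K ^ n) (B (c0Single K 0)) := by
    simp only [map_sum, map_smul]
    exact sum_congr rfl fun n _ => by rw [apply_c0Single_of_commute_shiftCLM hB]
  rw [Function.comp_apply, hBsum]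
  refine IsUltrametricDist.norm_sum_le_of_forall_le_of_nonneg (by positivity) fun n _ => ?_
  calc ‖x n • (shiftCLM K ^ n) (B (c0Single K 0))‖
      ≤ ‖x n‖ * ‖(shiftCLM K ^ n) (B (c0Single K 0))‖ := (norm_smul (x n) _).le
    _ ≤ ‖x‖ * ‖B (c0Single K 0)‖ :=
      mul_le_mul (x.norm_apply_le n) (norm_shiftCLM_pow_apply_le n _) (norm_nonneg _)
        (norm_nonneg _)
    _ = ‖B (c0Single K 0)‖ * ‖x‖ := mul_comm _ _

theorem aeval_shiftCLM_sum_monomial_apply_c0Single_zero (a : ℕ → K) (N : ℕ) :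
    Polynomial.aeval (shiftCLM K) (∑ n ∈ range N, Polynomial.monomial n (a n)) (c0Single K 0) =
      ∑ n ∈ range N, a n • c0Single K n := by
  simp only [map_sum, Polynomial.aeval_monomial, Algebra.algebraMap_eq_smul_one, smul_mul_assoc,
    one_mul, _root_.sum_apply, smul_apply, shiftCLM_pow_c0Single_zero]

end Shift

theorem commutant_approx_by_polynomials_in_shift_general
    (K : Type*) [NontriviallyNormedField K] [IsUltrametricDist K]
    (A : C₀(ℕ, K) →L[K] C₀(ℕ, K))
    (hcomm : A ∘L shiftCLM K = shiftCLM K ∘L A) :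
    ∀ ε : ℝ, 0 < ε → ∃ Q : Polynomial K,
      ‖A - Polynomial.aeval (shiftCLM K) Q‖ < ε := by
  intro ε hε
  set a := A (c0Single K 0)
  obtain ⟨N, hN⟩ := Metric.tendsto_atTop.mp (tendsto_sum_range_smul_c0Single a) ε hε
  set Q : Polynomial K := ∑ n ∈ range N, Polynomial.monomial n (a n)
  have hA : Commute A (shiftCLM K) := hcomm
  have hQ : Commute (Polynomial.aeval (shiftCLM K) Q) (shiftCLM K) := by
    simpa using (Commute.all Q Polynomial.X).map (Polynomial.aeval (shiftCLM K))
  refine ⟨Q, ?_⟩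
  calc ‖A - Polynomial.aeval (shiftCLM K) Q‖
      ≤ ‖(A - Polynomial.aeval (shiftCLM K) Q) (c0Single K 0)‖ :=
        opNorm_le_norm_apply_c0Single_zero (Commute.sub_left (R := C₀(ℕ, K) →L[K] C₀(ℕ, K)) hA hQ)
    _ = dist (∑ n ∈ range N, a n • c0Single K n) a := by
        rw [sub_apply, aeval_shiftCLM_sum_monomial_apply_c0Single_zero, dist_eq_norm']
    _ < ε := hN N le_rfl

/-- Every bounded operator commuting with `S₁` (multiplication by `z` on
the Tate algebra, i.e. the coefficient shift on `c₀`) is a limit, in the uniform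
operator topology, of polynomials in `S₁`. -/
theorem commutant_approx_by_polynomials_in_shift
    (p : ℕ) [Fact p.Prime] (K : Type*) [NontriviallyNormedField K]
    [IsAlgClosed K] [CompleteSpace K] [IsUltrametricDist K] [Algebra ℚ_[p] K]
    (hK : ∀ q : ℚ_[p], ‖algebraMap ℚ_[p] K q‖ = ‖q‖)
    (A : C₀(ℕ, K) →L[K] C₀(ℕ, K))
    (hcomm : A ∘L shiftCLM K = shiftCLM K ∘L A) :
    ∀ ε : ℝ, 0 < ε → ∃ Q : Polynomial K,
      ‖A - Polynomial.aeval (shiftCLM K) Q‖ < ε :=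
  commutant_approx_by_polynomials_in_shift_general K A hcomm
end

section
/- For every λ ∈ ℂ_p with |λ|_p < 1, the function φ_λ(x) = (1+λ)^x (defined for x ∈ ℤ_p via the convergent binomial series Σ_{n≥0} λⁿ Pₙ(x)) is a continuous eigenfunction of the difference operator T₂ with eigenvalue λ: φ_λ(x+1) − φ_λ(x) = λ·φ_λ(x). Conversely, every eigenvalue of T₂ on C(ℤ_p,ℂ_p) satisfies |λ|_p < 1. -/
open Filter Topology
open scoped fwdDiff

/-!
Through `ℤ_p ⊆ ℚ_p → K`, the field `K` becomes a `ℤ_p`-module, bounded by the hypothesis on norms,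
so the Mahler theory of `C(ℤ_p, K)` applies. For `|λ| < 1` the series `Σ λⁿ Pₙ` is the Mahler
series with coefficients `λⁿ → 0`, which is the continuous additive character `κ` of `ℤ_p` with
`κ(1) = 1 + λ`; hence `κ(x + 1) = κ(x) (1 + λ)`.

Conversely, an eigenfunction satisfies `Δφ = λφ`, so its Mahler coefficients are
`Δⁿφ(0) = λⁿ φ(0)`, and they tend to `0` by Mahler's theorem. Since `φ(n) = (1 + λ)ⁿ φ(0)` on the
dense subset `ℕ`, `φ ≠ 0` forces `φ(0) ≠ 0`, hence `λⁿ → 0`, i.e. `|λ| < 1`.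
-/

/-- The `n`-th Mahler polynomial `Pₙ(x) = x(x-1)⋯(x-n+1)/n!`, viewed as a function
`ℤ_p → ℂ_p` (the field `K` plays the role of `ℂ_p`). -/
noncomputable def mahlerK (p : ℕ) [Fact p.Prime] (K : Type*) [NontriviallyNormedField K]
    [Algebra ℚ_[p] K] (n : ℕ) (x : ℤ_[p]) : K :=
  algebraMap ℚ_[p] K (mahler n x)

lemma fwdDiff_iter_eq_pow_smul {M G R : Type*} [AddCommMonoid M] [AddCommGroup G] [Monoid R]
    [DistribMulAction R G] {h : M} {f : M → G} {c : R} (hf : Δ_[h] f = c • f) (n : ℕ) :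
    Δ_[h] ^[n] f = c ^ n • f := by
  induction n with
  | zero => simp
  | succ n ih =>
    rw [Function.iterate_succ_apply, hf, fwdDiff_iter_const_smul, ih, smul_smul, pow_succ']

lemma apply_natCast_eq_pow_mul {R M : Type*} [AddMonoidWithOne R] [Monoid M] {f : R → M}
    {μ : M} (h : ∀ x, f (x + 1) = μ * f x) (n : ℕ) : f n = μ ^ n * f 0 := by
  induction n with
  | zero => simp
  | succ n ih => rw [Nat.cast_succ, h, ih, pow_succ', mul_assoc]

namespace PadicInt

variable {p : ℕ} [Fact p.Prime]

lemma mahlerSeries_pow_apply_add_one_sub {R : Type*} [NormedRing R] [Algebra ℤ_[p] R]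
    [IsBoundedSMul ℤ_[p] R] [IsUltrametricDist R] [CompleteSpace R] {r : R}
    (hr : Tendsto (r ^ ·) atTop (𝓝 0)) (x : ℤ_[p]) :
    mahlerSeries (r ^ ·) (x + 1) - mahlerSeries (r ^ ·) x = mahlerSeries (r ^ ·) x * r := by
  have hκ := congrFun (coe_addChar_of_value_at_one (p := p) hr)
  rw [← hκ, ← hκ, AddChar.map_add_eq_mul, addChar_of_value_at_one_def, mul_add, mul_one,
    add_sub_cancel_left]

lemma norm_lt_one_of_apply_add_one_sub {K : Type*} [NormedField K] [IsUltrametricDist K]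
    [Module ℤ_[p] K] [IsBoundedSMul ℤ_[p] K] {lam : K} {φ : C(ℤ_[p], K)} (hφ : φ ≠ 0)
    (h : ∀ x, φ (x + 1) - φ x = lam * φ x) : ‖lam‖ < 1 := by
  have hφ0 : φ 0 ≠ 0 := by
    refine fun hφ0 ↦ hφ (ContinuousMap.coe_injective (Continuous.ext_on
      denseRange_natCast φ.continuous continuous_const ?_))
    rintro _ ⟨n, rfl⟩
    simp [apply_natCast_eq_pow_mul (f := φ) (μ := 1 + lam) (fun x ↦ by linear_combination h x),
      hφ0]
  have hΔ : Δ_[1] ⇑φ = lam • ⇑φ := funext h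
  have hcoeff : Tendsto (fun n ↦ lam ^ n * φ 0) atTop (𝓝 0) :=
    (fwdDiff_tendsto_zero φ).congr fun n ↦ congrFun (fwdDiff_iter_eq_pow_smul hΔ n) 0
  rw [← tendsto_pow_atTop_nhds_zero_iff_norm_lt_one]
  simpa [hφ0] using hcoeff.mul_const (φ 0)⁻¹

end PadicInt

theorem coherent_states_eigenfunctions_general
    (p : ℕ) [Fact p.Prime] (K : Type*) [NontriviallyNormedField K]
    [CompleteSpace K] [IsUltrametricDist K] [Algebra ℚ_[p] K]
    (hK : ∀ q : ℚ_[p], ‖algebraMap ℚ_[p] K q‖ = ‖q‖) :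
    (∀ lam : K, ‖lam‖ < 1 →
      Continuous (fun x : ℤ_[p] => ∑' n : ℕ, lam ^ n * mahlerK p K n x) ∧
      ∀ x : ℤ_[p],
        (∑' n : ℕ, lam ^ n * mahlerK p K n (x + 1))
            - (∑' n : ℕ, lam ^ n * mahlerK p K n x)
          = lam * ∑' n : ℕ, lam ^ n * mahlerK p K n x) ∧
    (∀ lam : K, ∀ φ : C(ℤ_[p], K), φ ≠ 0 →
      (∀ x : ℤ_[p], φ (x + 1) - φ x = lam * φ x) → ‖lam‖ < 1) := by
  let _ : Algebra ℤ_[p] K := ((algebraMap ℚ_[p] K).comp PadicInt.Coe.ringHom).toAlgebra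
  have : IsBoundedSMul ℤ_[p] K := .of_norm_smul_le fun a x ↦ by
    change ‖algebraMap ℚ_[p] K a * x‖ ≤ ‖a‖ * ‖x‖
    rw [norm_mul, hK, PadicInt.norm_def]
  refine ⟨fun lam hlam ↦ ?_, fun _ _ hφ h ↦ PadicInt.norm_lt_one_of_apply_add_one_sub hφ h⟩
  have hr := tendsto_pow_atTop_nhds_zero_of_norm_lt_one hlam
  have hseries (x : ℤ_[p]) :
      ∑' n, lam ^ n * mahlerK p K n x = PadicInt.mahlerSeries (lam ^ ·) x := by
    rw [PadicInt.mahlerSeries_apply hr]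
    exact tsum_congr fun n ↦ mul_comm _ _
  simp only [hseries]
  exact ⟨map_continuous _, fun x ↦ by
    rw [PadicInt.mahlerSeries_pow_apply_add_one_sub hr, mul_comm]⟩

/-- For `λ ∈ ℂ_p` with `|λ| < 1`, the function
`φ_λ(x) = (1+λ)^x = ∑ λⁿ Pₙ(x)` is a continuous eigenfunction of the difference
operator `T₂φ(x) = φ(x+1) − φ(x)` with eigenvalue `λ`; conversely, every eigenvalue of
`T₂` on `C(ℤ_p, ℂ_p)` satisfies `|λ| < 1`. -/
theorem coherent_states_eigenfunctions
    (p : ℕ) [Fact p.Prime] (K : Type*) [NontriviallyNormedField K]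
    [IsAlgClosed K] [CompleteSpace K] [IsUltrametricDist K] [Algebra ℚ_[p] K]
    (hK : ∀ q : ℚ_[p], ‖algebraMap ℚ_[p] K q‖ = ‖q‖) :
    (∀ lam : K, ‖lam‖ < 1 →
      Continuous (fun x : ℤ_[p] => ∑' n : ℕ, lam ^ n * mahlerK p K n x) ∧
      ∀ x : ℤ_[p],
        (∑' n : ℕ, lam ^ n * mahlerK p K n (x + 1))
            - (∑' n : ℕ, lam ^ n * mahlerK p K n x)
          = lam * ∑' n : ℕ, lam ^ n * mahlerK p K n x) ∧
    (∀ lam : K, ∀ φ : C(ℤ_[p], K), φ ≠ 0 →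
      (∀ x : ℤ_[p], φ (x + 1) - φ x = lam * φ x) → ‖lam‖ < 1) :=
  coherent_states_eigenfunctions_general p K hK
end

section
/- The set of cyclic vectors of the backward shift T on c₀(ℂ_p) is dense in c₀(ℂ_p). -/
/-!
Fix `0 < ‖c‖ < 1`. If `y n = c ^ (n + 1) ^ 2` for all large `n`, then, the standard
basis vectors `e j` with `j < k` being already in the closed span `M` of the orbit of `y`, the
vectors `(c ^ (n + k + 1) ^ 2)⁻¹ • (Tⁿ y - ∑_{j<k} y (n + j) • e j)` lie in `M` and converge to
`e k`, because `(n + i + 1) ^ 2 - (n + k + 1) ^ 2 ≥ n + 1` for `i > k`. So `M` contains all `e k`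
and hence is everything. Any `x` is the limit of such vectors `y`: keep the first `N`
coordinates of `x` and replace its tail by the tail of `(c ^ (n + 1) ^ 2)ₙ`.
-/

open Filter Topology ZeroAtInfty

/-- The backward shift `(x₀,x₁,…) ↦ (x₁,x₂,…)` on `c₀`. -/
noncomputable def bshiftC0 {K : Type*} [NormedField K] (x : C₀(ℕ, K)) : C₀(ℕ, K) where
  toFun := fun n => x (n + 1)
  continuous_toFun := continuous_of_discreteTopology
  zero_at_infty' := by
    rw [cocompact_eq_atTop (α := ℕ)]
    refine (tendsto_add_atTop_iff_nat 1).mpr ?_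
    have h := x.zero_at_infty'
    rw [cocompact_eq_atTop (α := ℕ)] at h
    exact h

section Construction

variable {β : Type*} [TopologicalSpace β] [Zero β]

lemma tendsto_atTop_zero_of_c0 (x : C₀(ℕ, β)) : Tendsto x atTop (𝓝 0) := by
  simpa [cocompact_eq_atTop] using x.zero_at_infty'

def c0OfTendsto (f : ℕ → β) (hf : Tendsto f atTop (𝓝 0)) : C₀(ℕ, β) where
  toFun := f
  continuous_toFun := continuous_of_discreteTopology
  zero_at_infty' := by rwa [cocompact_eq_atTop]

end Construction

lemma norm_c0_le {E : Type*} [SeminormedAddCommGroup E] {x : C₀(ℕ, E)} {C : ℝ} (hC : 0 ≤ C)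
    (h : ∀ n, ‖x n‖ ≤ C) : ‖x‖ ≤ C := by
  rw [← ZeroAtInftyContinuousMap.norm_toBCF_eq_norm]
  exact (BoundedContinuousFunction.norm_le hC).mpr h

section C0

variable {K : Type*} [NormedField K]

lemma bshiftC0_iterate_apply (x : C₀(ℕ, K)) (m i : ℕ) : (bshiftC0^[m] x) i = x (m + i) := by
  induction m generalizing x with
  | zero => simp
  | succ m ih =>
    rw [Function.iterate_succ_apply, ih]
    exact congrArg x (by omega)

noncomputable def stdBasisC0 (k : ℕ) : C₀(ℕ, K) :=
  c0OfTendsto (fun n => if n = k then 1 else 0)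
    (tendsto_atTop_of_eventually_const (i₀ := k + 1) fun n hn => if_neg (by omega))

lemma stdBasisC0_apply (k n : ℕ) : stdBasisC0 (K := K) k n = if n = k then 1 else 0 := rfl

noncomputable def truncC0 (N : ℕ) (x : C₀(ℕ, K)) : C₀(ℕ, K) :=
  c0OfTendsto (fun n => if n < N then x n else 0)
    (tendsto_atTop_of_eventually_const (i₀ := N) fun n hn => if_neg (by omega))

lemma truncC0_apply (N : ℕ) (x : C₀(ℕ, K)) (n : ℕ) :
    truncC0 N x n = if n < N then x n else 0 := rfl

lemma truncC0_succ (N : ℕ) (x : C₀(ℕ, K)) :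
    truncC0 (N + 1) x = truncC0 N x + x N • stdBasisC0 N := by
  ext n
  simp only [ZeroAtInftyContinuousMap.add_apply, ZeroAtInftyContinuousMap.smul_apply,
    truncC0_apply, stdBasisC0_apply, smul_eq_mul, mul_ite, mul_one, mul_zero]
  rcases lt_trichotomy n N with h | rfl | h
  · simp [h, h.ne, Nat.lt_succ_of_lt h]
  · simp
  · simp [h.ne', show ¬n < N + 1 by omega, show ¬n < N by omega]

lemma truncC0_mem {M : Submodule K C₀(ℕ, K)} {N : ℕ} (hM : ∀ j < N, stdBasisC0 j ∈ M)
    (x : C₀(ℕ, K)) : truncC0 N x ∈ M := by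
  induction N with
  | zero => convert M.zero_mem; ext n; simp [truncC0_apply]
  | succ N ih =>
    rw [truncC0_succ]
    exact M.add_mem (ih fun j hj => hM j (by omega)) (M.smul_mem _ (hM N N.lt_succ_self))

lemma sub_truncC0_apply (N : ℕ) (x : C₀(ℕ, K)) (n : ℕ) :
    (x - truncC0 N x) n = if n < N then 0 else x n := by
  simp only [ZeroAtInftyContinuousMap.sub_apply, truncC0_apply]
  split_ifs <;> simp

lemma norm_sub_truncC0_le {N : ℕ} {x : C₀(ℕ, K)} {C : ℝ} (hC : 0 ≤ C)
    (h : ∀ n, N ≤ n → ‖x n‖ ≤ C) : ‖x - truncC0 N x‖ ≤ C := by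
  refine norm_c0_le hC fun n => ?_
  rw [sub_truncC0_apply]
  split_ifs with hn
  · simpa using hC
  · exact h n (by omega)

lemma tendsto_truncC0 (x : C₀(ℕ, K)) : Tendsto (truncC0 · x) atTop (𝓝 x) := by
  rw [tendsto_iff_norm_sub_tendsto_zero, Metric.tendsto_atTop]
  intro ε hε
  obtain ⟨N, hN⟩ := Metric.tendsto_atTop.mp (tendsto_atTop_zero_of_c0 x) (ε / 2) (by linarith)
  refine ⟨N, fun m hm => ?_⟩
  have htail : ‖x - truncC0 m x‖ ≤ ε / 2 :=
    norm_sub_truncC0_le (by linarith) fun n hn => by simpa using (hN n (by omega)).le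
  rw [dist_zero_right, norm_norm, norm_sub_rev]
  linarith

lemma topologicalClosure_eq_top_of_stdBasisC0_mem {M : Submodule K C₀(ℕ, K)}
    (hM : ∀ k, stdBasisC0 k ∈ M.topologicalClosure) : M.topologicalClosure = ⊤ :=
  eq_top_iff.mpr fun x _ => M.isClosed_topologicalClosure.mem_of_tendsto (tendsto_truncC0 x)
    (Eventually.of_forall fun _ => truncC0_mem (fun j _ => hM j) x)

noncomputable def sqPowC0 (c : K) (hc : ‖c‖ < 1) : C₀(ℕ, K) :=
  c0OfTendsto (fun n => c ^ (n + 1) ^ 2) <| by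
    refine squeeze_zero_norm (fun n => ?_)
      (tendsto_pow_atTop_nhds_zero_of_lt_one (norm_nonneg c) hc)
    rw [norm_pow]
    exact pow_le_pow_of_le_one (norm_nonneg c) hc.le (by nlinarith)

lemma sqPowC0_apply (c : K) (hc : ‖c‖ < 1) (n : ℕ) : sqPowC0 c hc n = c ^ (n + 1) ^ 2 := rfl

noncomputable def orbitSpanC0 (x : C₀(ℕ, K)) : Submodule K C₀(ℕ, K) :=
  Submodule.span K (Set.range fun n : ℕ => bshiftC0^[n] x)

lemma stdBasisC0_mem_closure_orbitSpanC0 {y : C₀(ℕ, K)} {c : K} {N : ℕ} (hc : c ≠ 0)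
    (hc1 : ‖c‖ < 1) (hy : ∀ n, N ≤ n → y n = c ^ (n + 1) ^ 2) (k : ℕ) :
    stdBasisC0 k ∈ (orbitSpanC0 y).topologicalClosure := by
  set M := (orbitSpanC0 y).topologicalClosure
  induction k using Nat.strong_induction_on with
  | _ k ih =>
  set g : ℕ → C₀(ℕ, K) := fun n =>
    (c ^ (n + k + 1) ^ 2)⁻¹ • (bshiftC0^[n] y - truncC0 k (bshiftC0^[n] y))
  have hg_mem : ∀ n, g n ∈ M := fun n =>
    M.smul_mem _ <| M.sub_mem
      ((orbitSpanC0 y).le_topologicalClosure (Submodule.subset_span ⟨n, rfl⟩))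
      (truncC0_mem ih _)
  have hg_close : ∀ n, N ≤ n → ‖g n - stdBasisC0 k‖ ≤ ‖c‖ ^ n := by
    intro n hn
    refine norm_c0_le (by positivity) fun i => ?_
    rw [ZeroAtInftyContinuousMap.sub_apply, ZeroAtInftyContinuousMap.smul_apply,
      sub_truncC0_apply, bshiftC0_iterate_apply, stdBasisC0_apply, smul_eq_mul]
    rcases lt_trichotomy i k with hik | rfl | hik
    · simp [hik, hik.ne]
    · rw [hy _ (by omega)]
      simp [hc]
    · obtain ⟨d, hd⟩ := Nat.exists_eq_add_of_le
        (show (n + k + 1) ^ 2 + n ≤ (n + i + 1) ^ 2 by nlinarith)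
      rw [if_neg (by omega), if_neg (by omega), sub_zero, hy _ (by omega), hd, pow_add, pow_add,
        mul_assoc, inv_mul_cancel_left₀ (pow_ne_zero _ hc), ← pow_add, norm_pow]
      exact pow_le_pow_of_le_one (norm_nonneg c) hc1.le (by omega)
  have hg_lim : Tendsto g atTop (𝓝 (stdBasisC0 k)) := by
    rw [tendsto_iff_norm_sub_tendsto_zero]
    exact squeeze_zero_norm' (eventually_atTop.mpr ⟨N, fun n hn => by simpa using hg_close n hn⟩)
      (tendsto_pow_atTop_nhds_zero_of_lt_one (norm_nonneg c) hc1)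
  exact (orbitSpanC0 y).isClosed_topologicalClosure.mem_of_tendsto hg_lim
    (Eventually.of_forall hg_mem)

end C0

theorem cyclic_vectors_dense_general
    (K : Type*) [NontriviallyNormedField K] :
    Dense {x : C₀(ℕ, K) |
      (Submodule.span K (Set.range fun n : ℕ => bshiftC0^[n] x)).topologicalClosure
        = ⊤} := by
  obtain ⟨c, hc0, hc1⟩ := NormedField.exists_norm_lt_one K
  set s := sqPowC0 c hc1
  intro x
  have hlim : Tendsto (fun N => truncC0 N x + (s - truncC0 N s)) atTop (𝓝 x) := by
    simpa using (tendsto_truncC0 x).add ((tendsto_const_nhds (x := s)).sub (tendsto_truncC0 s))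
  refine mem_closure_of_tendsto hlim (Eventually.of_forall fun N => ?_)
  refine topologicalClosure_eq_top_of_stdBasisC0_mem
    (stdBasisC0_mem_closure_orbitSpanC0 (norm_pos_iff.mp hc0) hc1 (N := N) fun n hn => ?_)
  simp [ZeroAtInftyContinuousMap.add_apply, truncC0_apply, show ¬n < N by omega, s, sqPowC0_apply]

/-- The set of cyclic vectors of the backward shift `T` on `c₀(ℂ_p)`
(vectors whose orbit `{Tⁿx : n ≥ 0}` has dense linear span) is dense in `c₀`. -/
theorem cyclic_vectors_dense
    (p : ℕ) [Fact p.Prime] (K : Type*) [NontriviallyNormedField K]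
    [IsAlgClosed K] [CompleteSpace K] [IsUltrametricDist K] [Algebra ℚ_[p] K]
    (hK : ∀ q : ℚ_[p], ‖algebraMap ℚ_[p] K q‖ = ‖q‖) :
    Dense {x : C₀(ℕ, K) |
      (Submodule.span K (Set.range fun n : ℕ => bshiftC0^[n] x)).topologicalClosure
        = ⊤} :=
  cyclic_vectors_dense_general K
end

section
/- Any x ∈ c₀(ℂ_p) with |x_k|_p = p^{-p^k} for all sufficiently large k satisfies max_{j≥1} |x_{k+j}|_p/|x_k|_p → 0 as k → ∞, and is hence a cyclic vector for the backward shift T. -/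
open Filter Topology ZeroAtInfty

noncomputable def c0single {K : Type*} [NormedField K] (m : ℕ) (a : K) : C₀(ℕ, K) where
  toFun := fun n => if n = m then a else 0
  continuous_toFun := continuous_of_discreteTopology
  zero_at_infty' := by
    rw [cocompact_eq_atTop (α := ℕ)]
    refine Tendsto.congr' ?_ tendsto_const_nhds
    filter_upwards [eventually_gt_atTop m] with n hn
    simp [hn.ne']

@[simp] theorem c0single_apply {K : Type*} [NormedField K] (m : ℕ) (a : K) (n : ℕ) :
    c0single m a n = if n = m then a else 0 := rfl

theorem c0_norm_le {K : Type*} [NormedField K] (f : C₀(ℕ, K)) {C : ℝ} (hC : 0 ≤ C)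
    (h : ∀ n, ‖f n‖ ≤ C) : ‖f‖ ≤ C := by
  rw [← ZeroAtInftyContinuousMap.norm_toBCF_eq_norm]
  exact (BoundedContinuousFunction.norm_le hC).mpr h

theorem c0_sum_apply {K : Type*} [NormedField K] {ι : Type*} (s : Finset ι)
    (f : ι → C₀(ℕ, K)) (n : ℕ) : (∑ i ∈ s, f i) n = ∑ i ∈ s, f i n := by
  classical
  induction s using Finset.induction with
  | empty => simp
  | insert _ _ h ih => simp [Finset.sum_insert h, ih]

theorem bshift_iter_apply {K : Type*} [NormedField K] (y : C₀(ℕ, K)) :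
    ∀ n i, (bshiftC0^[n] y) i = y (i + n) := by
  intro n
  induction n with
  | zero => simp
  | succ n ih =>
    intro i
    rw [Function.iterate_succ_apply']
    show (bshiftC0^[n] y) (i + 1) = y (i + (n + 1))
    rw [ih (i + 1)]
    congr 1
    omega
theorem decay_tendsto (p : ℕ) (hp : 2 ≤ p) :
    Tendsto (fun k : ℕ => (p : ℝ) ^ (p ^ k) * ((p : ℝ) ^ (p ^ (k + 1)))⁻¹) atTop (𝓝 0) := by
  have hp2' : (2:ℝ) ≤ p := by exact_mod_cast hp
  have hp0 : (0:ℝ) < p := by linarith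
  have key : ∀ k : ℕ, (p : ℝ) ^ (p ^ k) * ((p : ℝ) ^ (p ^ (k + 1)))⁻¹ ≤ ((2:ℝ)⁻¹) ^ k := by
    intro k
    have h2k : 2 ^ k ≤ p ^ k := Nat.pow_le_pow_left hp k
    have hk2 : k < 2 ^ k := Nat.lt_two_pow_self
    have h1 : p ^ k + p ^ k ≤ p ^ (k + 1) := by
      rw [pow_succ]
      calc p ^ k + p ^ k = p ^ k * 2 := by ring
        _ ≤ p ^ k * p := Nat.mul_le_mul_left _ hp
    have hd : k ≤ p ^ (k + 1) - p ^ k := by omega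
    have hle : p ^ k ≤ p ^ (k + 1) := by omega
    have hsplit : (p:ℝ) ^ (p ^ (k + 1)) = (p:ℝ) ^ (p ^ k) * (p:ℝ) ^ (p ^ (k + 1) - p ^ k) := by
      rw [← pow_add, Nat.add_sub_cancel' hle]
    rw [hsplit, mul_inv, ← mul_assoc, mul_inv_cancel₀ (by positivity), one_mul, inv_pow]
    have hc : (2:ℝ) ^ k ≤ (p:ℝ) ^ (p ^ (k + 1) - p ^ k) :=
      le_trans (pow_le_pow_right₀ one_le_two hd)
        (pow_le_pow_left₀ (by norm_num) hp2' _)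
    exact inv_anti₀ (by positivity) hc
  exact squeeze_zero (fun k => by positivity) key
    (tendsto_pow_atTop_nhds_zero_of_lt_one (by norm_num) (by norm_num))


/-- Any `x ∈ c₀(ℂ_p)` with `‖x_k‖ = p^{-pᵏ}` for all sufficiently large
`k` satisfies `max_{j≥1} ‖x_{k+j}‖/‖x_k‖ → 0` as `k → ∞`, and hence is a cyclic vector
for the backward shift `T`. -/
theorem rapidly_decaying_is_cyclic
    (p : ℕ) [Fact p.Prime] (K : Type*) [NontriviallyNormedField K]
    [IsAlgClosed K] [CompleteSpace K] [IsUltrametricDist K] [Algebra ℚ_[p] K]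
    (hK : ∀ q : ℚ_[p], ‖algebraMap ℚ_[p] K q‖ = ‖q‖)
    (x : C₀(ℕ, K)) (k₀ : ℕ)
    (hx : ∀ k, k₀ ≤ k → ‖x k‖ = ((p : ℝ) ^ (p ^ k))⁻¹) :
    Tendsto (fun k : ℕ => ⨆ j : ℕ, ‖x (k + 1 + j)‖ / ‖x k‖) atTop (𝓝 0) ∧
    (Submodule.span K (Set.range fun n : ℕ => bshiftC0^[n] x)).topologicalClosure
      = ⊤ := by
  have hp : p.Prime := Fact.out
  have hp2 : 2 ≤ p := hp.two_le
  have hp0 : (0:ℝ) < p := by exact_mod_cast hp.pos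
  have hp1 : (1:ℝ) ≤ p := by exact_mod_cast hp.one_le
  set b : ℕ → ℝ := fun k => (p : ℝ) ^ (p ^ k) * ((p : ℝ) ^ (p ^ (k + 1)))⁻¹ with hbdef
  have hb0 : ∀ k, 0 ≤ b k := fun k => by positivity
  have hbt : Tendsto b atTop (𝓝 0) := decay_tendsto p hp2
  have hmono : ∀ {a c : ℕ}, a ≤ c → ((p:ℝ) ^ c)⁻¹ ≤ ((p:ℝ) ^ a)⁻¹ := by
    intro a c h
    exact inv_anti₀ (by positivity) (pow_le_pow_right₀ hp1 h)
  have hratio : ∀ k j : ℕ, k₀ ≤ k → 1 ≤ j →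
      ‖x (k + j)‖ / ‖x k‖ ≤ b k := by
    intro k j hk hj
    rw [hx _ (by omega), hx _ hk, div_eq_mul_inv, inv_inv, mul_comm]
    apply mul_le_mul_of_nonneg_left _ (by positivity)
    exact hmono (Nat.pow_le_pow_right hp.pos (by omega))
  constructor
  · apply squeeze_zero' ?_ ?_ hbt
    · filter_upwards with k
      exact Real.iSup_nonneg fun j => div_nonneg (norm_nonneg _) (norm_nonneg _)
    · filter_upwards [eventually_ge_atTop k₀] with k hk
      apply ciSup_le
      intro j
      have := hratio k (1 + j) hk (by omega)
      rwa [← add_assoc] at this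
  · set S := (Submodule.span K (Set.range fun n : ℕ => bshiftC0^[n] x)).topologicalClosure
      with hS
    have hSc : IsClosed (S : Set C₀(ℕ, K)) := Submodule.isClosed_topologicalClosure _
    have hTn : ∀ n : ℕ, bshiftC0^[n] x ∈ S := fun n =>
      Submodule.le_topologicalClosure _ (Submodule.subset_span (Set.mem_range_self n))
    have hnz : ∀ k, k₀ ≤ k → x k ≠ 0 := by
      intro k hk h0
      have h1 := hx k hk
      rw [h0, norm_zero] at h1
      have h2 : (0:ℝ) < ((p:ℝ) ^ (p ^ k))⁻¹ := by positivity
      linarith [h1 ▸ h2]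
    -- every standard basis vector is in S
    have hsingle : ∀ m : ℕ, c0single m (1:K) ∈ S := by
      intro m
      induction m using Nat.strong_induction_on with
      | _ m IH =>
      have hmem : c0single m (1:K) ∈ closure (S : Set C₀(ℕ, K)) := by
        rw [Metric.mem_closure_iff]
        intro ε hε
        obtain ⟨n, hn1, hn2⟩ : ∃ n, k₀ ≤ n + m ∧ b (n + m) < ε := by
          have h1 : Tendsto (fun n : ℕ => b (n + m)) atTop (𝓝 0) :=
            hbt.comp (tendsto_add_atTop_nat m)
          have h2 := h1.eventually (gt_mem_nhds hε)
          exact ((eventually_ge_atTop k₀).mono (fun n hn => le_trans hn (Nat.le_add_right n m))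
            |>.and h2).exists
        have hxnm : x (n + m) ≠ 0 := hnz _ hn1
        set w := (x (n + m))⁻¹ •
            (bshiftC0^[n] x - ∑ i ∈ Finset.range m, x (n + i) • c0single i (1:K)) with hw
        refine ⟨w, ?_, ?_⟩
        · apply Submodule.smul_mem _ _ (Submodule.sub_mem _ (hTn n) _)
          exact Submodule.sum_mem _ fun i hi =>
            Submodule.smul_mem _ _ (IH i (Finset.mem_range.mp hi))
        · rw [dist_eq_norm]
          have hcoord : ∀ j, ‖(c0single m (1:K) - w) j‖ ≤ b (n + m) := by
            intro j
            have happ : (c0single m (1:K) - w) j =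
                c0single m (1:K) j - (x (n + m))⁻¹ *
                (x (j + n) - ∑ i ∈ Finset.range m, x (n + i) * (if j = i then (1:K) else 0)) := by
              simp only [hw, ZeroAtInftyContinuousMap.sub_apply,
                ZeroAtInftyContinuousMap.smul_apply, c0_sum_apply, bshift_iter_apply,
                c0single_apply, smul_eq_mul]
            rcases lt_trichotomy j m with hjm | hjm | hjm
            · -- j < m : both terms vanish
              have hsum : ∑ i ∈ Finset.range m, x (n + i) * (if j = i then (1:K) else 0)
                  = x (n + j) := by
                rw [Finset.sum_eq_single j]
                · simp
                · intro i _ hij; simp [Ne.symm hij]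
                · intro h; exact absurd (Finset.mem_range.mpr hjm) h
              rw [happ, hsum]
              have : x (j + n) = x (n + j) := by rw [Nat.add_comm]
              simp [hjm.ne, this, hb0]
            · -- j = m
              subst hjm
              have hsum : ∑ i ∈ Finset.range j, x (n + i) * (if j = i then (1:K) else 0)
                  = 0 := by
                apply Finset.sum_eq_zero
                intro i hi
                have : j ≠ i := by have := Finset.mem_range.mp hi; omega
                simp [this]
              rw [happ, hsum, sub_zero, c0single_apply, if_pos rfl]
              have : x (j + n) = x (n + j) := by rw [Nat.add_comm]
              rw [this, inv_mul_cancel₀ hxnm, sub_self, norm_zero]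
              exact hb0 _
            · -- j > m : tail term
              have hsum : ∑ i ∈ Finset.range m, x (n + i) * (if j = i then (1:K) else 0)
                  = 0 := by
                apply Finset.sum_eq_zero
                intro i hi
                have : j ≠ i := by have := Finset.mem_range.mp hi; omega
                simp [this]
              rw [happ, hsum, sub_zero, c0single_apply, if_neg hjm.ne', zero_sub, norm_neg, norm_mul,
                norm_inv, hx _ hn1, hx _ (by omega : k₀ ≤ j + n), inv_inv]
              have h1 : ((p:ℝ) ^ (p ^ (j + n)))⁻¹ ≤ ((p:ℝ) ^ (p ^ (n + m + 1)))⁻¹ :=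
                hmono (Nat.pow_le_pow_right hp.pos (by omega))
              calc (p:ℝ) ^ (p ^ (n + m)) * ((p:ℝ) ^ (p ^ (j + n)))⁻¹
                  ≤ (p:ℝ) ^ (p ^ (n + m)) * ((p:ℝ) ^ (p ^ (n + m + 1)))⁻¹ :=
                    mul_le_mul_of_nonneg_left h1 (by positivity)
                _ = b (n + m) := rfl
          calc ‖c0single m (1:K) - w‖ ≤ b (n + m) := c0_norm_le _ (hb0 _) hcoord
            _ < ε := hn2
      rwa [hSc.closure_eq] at hmem
    -- singles generate a dense subspace
    rw [eq_top_iff]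
    intro f _
    have htrunc : ∀ N : ℕ, (∑ i ∈ Finset.range N, f i • c0single i (1:K)) ∈ S :=
      fun N => Submodule.sum_mem _ fun i _ => Submodule.smul_mem _ _ (hsingle i)
    have hlim : Tendsto (fun N => ∑ i ∈ Finset.range N, f i • c0single i (1:K))
        atTop (𝓝 f) := by
      rw [Metric.tendsto_atTop]
      intro ε hε
      have h0 := f.zero_at_infty'
      rw [cocompact_eq_atTop (α := ℕ)] at h0
      have h1 : ∀ᶠ n in atTop, ‖f n‖ < ε / 2 := by
        have := h0.eventually (Metric.ball_mem_nhds 0 (by linarith : (0:ℝ) < ε / 2))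
        filter_upwards [this] with n hn
        simpa [dist_eq_norm] using hn
      obtain ⟨N, hN⟩ := h1.exists_forall_of_atTop
      refine ⟨N, fun M hM => ?_⟩
      rw [dist_eq_norm]
      have hcoord : ∀ j, ‖((∑ i ∈ Finset.range M, f i • c0single i (1:K)) - f) j‖ ≤ ε / 2 := by
        intro j
        rw [ZeroAtInftyContinuousMap.sub_apply, c0_sum_apply]
        by_cases hj : j < M
        · have hsum : ∑ i ∈ Finset.range M, (f i • c0single i (1:K)) j = f j := by
            rw [Finset.sum_eq_single j]
            · simp
            · intro i _ hij
              rw [ZeroAtInftyContinuousMap.smul_apply, c0single_apply]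
              simp [Ne.symm hij]
            · intro h; exact absurd (Finset.mem_range.mpr hj) h
          rw [hsum, sub_self, norm_zero]
          linarith
        · have hsum : ∑ i ∈ Finset.range M, (f i • c0single i (1:K)) j = 0 := by
            apply Finset.sum_eq_zero
            intro i hi
            have hij : j ≠ i := by have := Finset.mem_range.mp hi; omega
            rw [ZeroAtInftyContinuousMap.smul_apply, c0single_apply]
            simp [hij]
          rw [hsum, zero_sub, norm_neg]
          exact le_of_lt (hN j (by omega))
      calc ‖(∑ i ∈ Finset.range M, f i • c0single i (1:K)) - f‖
          ≤ ε / 2 := c0_norm_le _ (by linarith) hcoord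
        _ < ε := by linarith
    exact hSc.mem_of_tendsto hlim (Eventually.of_forall htrunc)
end

section
/- Let E be a Banach space over ℂ_p and A a bounded operator on E with ‖A‖ ≤ 1 and ‖Aⁿu‖ → 0 for every u ∈ E. Then the map W : E → c₀(E) defined by Wu = (u, Au, A²u, …) is a linear isometry with closed range Y, the subspace Y is invariant under the backward shift T_E, and A = W⁻¹ ∘ (T_E|_Y) ∘ W. -/
/-!
Since `‖A‖ ≤ 1`, every term of the orbit `(Aⁿ u)ₙ` has norm at most `‖u‖ = ‖A⁰ u‖`, so its sup
norm in `c₀(E)` is exactly `‖u‖` and `W` is an isometry; its range is closed because `E` is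
complete. Shifting the orbit of `u` by one step gives the orbit of `A u`, which is both the
invariance of the range and the intertwining relation `T_E ∘ W = W ∘ A`.
-/

open Filter Topology ZeroAtInfty

/-- The backward shift `T_E (x₀,x₁,…) = (x₁,x₂,…)` on `c₀(E)`. -/
noncomputable def bshiftE {E : Type*} [NormedAddCommGroup E] (x : C₀(ℕ, E)) :
    C₀(ℕ, E) where
  toFun := fun n => x (n + 1)
  continuous_toFun := continuous_of_discreteTopology
  zero_at_infty' := by
    rw [cocompact_eq_atTop (α := ℕ)]
    refine (tendsto_add_atTop_iff_nat 1).mpr ?_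
    have h := x.zero_at_infty'
    rw [cocompact_eq_atTop (α := ℕ)] at h
    exact h

namespace ContinuousLinearMap

variable {K E : Type*} [NontriviallyNormedField K] [NormedAddCommGroup E] [NormedSpace K E]

theorem norm_pow_apply_le_of_norm_le_one {A : E →L[K] E} (hA : ‖A‖ ≤ 1) (u : E) (n : ℕ) :
    ‖(A ^ n) u‖ ≤ ‖u‖ := by
  induction n with
  | zero => simp
  | succ n ih =>
    calc ‖(A ^ (n + 1)) u‖ = ‖A ((A ^ n) u)‖ := by rw [pow_succ']; rfl
      _ ≤ ‖(A ^ n) u‖ := (A.le_of_opNorm_le hA _).trans_eq (one_mul _)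
      _ ≤ ‖u‖ := ih

variable (A : E →L[K] E) (horbit : ∀ u : E, Tendsto (fun n : ℕ => ‖(A ^ n) u‖) atTop (𝓝 0))

def orbitC₀ (u : E) : C₀(ℕ, E) where
  toFun n := (A ^ n) u
  continuous_toFun := continuous_of_discreteTopology
  zero_at_infty' := by
    rw [cocompact_eq_atTop]
    exact tendsto_zero_iff_norm_tendsto_zero.2 (horbit u)

@[simp]
theorem orbitC₀_apply (u : E) (n : ℕ) : orbitC₀ A horbit u n = (A ^ n) u := rfl

variable {A} in
theorem norm_orbitC₀ (hA : ‖A‖ ≤ 1) (u : E) : ‖orbitC₀ A horbit u‖ = ‖u‖ := by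
  rw [← ZeroAtInftyContinuousMap.norm_toBCF_eq_norm]
  refine le_antisymm ((BoundedContinuousFunction.norm_le (norm_nonneg u)).2 fun n => ?_) ?_
  · exact norm_pow_apply_le_of_norm_le_one hA u n
  · simpa using (orbitC₀ A horbit u).toBCF.norm_coe_le_norm 0

def orbitIsometry (hA : ‖A‖ ≤ 1) : E →ₗᵢ[K] C₀(ℕ, E) where
  toFun := orbitC₀ A horbit
  map_add' x y := by ext n; simp
  map_smul' c x := by ext n; simp
  norm_map' := norm_orbitC₀ horbit hA

variable (hA : ‖A‖ ≤ 1)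

@[simp]
theorem orbitIsometry_apply (u : E) (n : ℕ) : orbitIsometry A horbit hA u n = (A ^ n) u := rfl

theorem bshiftE_orbitIsometry (u : E) :
    bshiftE (orbitIsometry A horbit hA u) = orbitIsometry A horbit hA (A u) := by
  ext n
  simp [bshiftE, pow_succ]

end ContinuousLinearMap

theorem backward_shift_universal_general
    (K : Type*) [NontriviallyNormedField K]
    (E : Type*) [NormedAddCommGroup E] [NormedSpace K E] [CompleteSpace E]
    (A : E →L[K] E) (hA : ‖A‖ ≤ 1)
    (horbit : ∀ u : E, Tendsto (fun n : ℕ => ‖(A ^ n) u‖) atTop (𝓝 0)) :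
    ∃ W : E →ₗᵢ[K] C₀(ℕ, E),
      (∀ u : E, ∀ n : ℕ, W u n = (A ^ n) u) ∧
      IsClosed (Set.range fun u : E => W u) ∧
      (∀ y ∈ Set.range fun u : E => W u,
        bshiftE y ∈ Set.range fun u : E => W u) ∧
      (∀ u : E, bshiftE (W u) = W (A u)) := by
  let W := A.orbitIsometry horbit hA
  refine ⟨W, A.orbitIsometry_apply horbit hA, W.isometry.isClosedEmbedding.isClosed_range,
    ?_, A.bshiftE_orbitIsometry horbit hA⟩
  rintro _ ⟨u, rfl⟩
  exact ⟨A u, (A.bshiftE_orbitIsometry horbit hA u).symm⟩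

/-- universality of the backward shift: Let `E` be a Banach space over
`ℂ_p` and `A` a contraction on `E` with `‖Aⁿu‖ → 0` for every `u`. Then
`W u = (u, Au, A²u, …)` is a linear isometry of `E` onto a closed subspace
`Y = range W` of `c₀(E)` which is invariant under the backward shift `T_E`, and
`A = W⁻¹ ∘ (T_E|_Y) ∘ W`, i.e. `T_E (W u) = W (A u)` for all `u`. -/
theorem backward_shift_universal
    (p : ℕ) [Fact p.Prime] (K : Type*) [NontriviallyNormedField K]
    [IsAlgClosed K] [CompleteSpace K] [IsUltrametricDist K] [Algebra ℚ_[p] K]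
    (hK : ∀ q : ℚ_[p], ‖algebraMap ℚ_[p] K q‖ = ‖q‖)
    (E : Type*) [NormedAddCommGroup E] [NormedSpace K E] [CompleteSpace E]
    (A : E →L[K] E) (hA : ‖A‖ ≤ 1)
    (horbit : ∀ u : E, Tendsto (fun n : ℕ => ‖(A ^ n) u‖) atTop (𝓝 0)) :
    ∃ W : E →ₗᵢ[K] C₀(ℕ, E),
      (∀ u : E, ∀ n : ℕ, W u n = (A ^ n) u) ∧
      IsClosed (Set.range fun u : E => W u) ∧
      (∀ y ∈ Set.range fun u : E => W u,
        bshiftE y ∈ Set.range fun u : E => W u) ∧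
      (∀ u : E, bshiftE (W u) = W (A u)) :=
  backward_shift_universal_general K E A hA horbit
end
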